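/- A separable diagonal point set admits a planar bus realization if and only if it admits a planar bus realization in which every bus is a center-bus. -/

import Mathlib

open Set

/-- A colored point set: a finite set of points `P` with coordinates `x p`, `y p`
and colors `f p` in a finite color set `C`; the color map is surjective and no
two points share an x-coordinate or a y-coordinate. -/
structure CPS (P C : Type) [Fintype P] [Fintype C] where
  x : P → ℝ
  y : P → ℝ
  f : P → C
  f_surj : Function.Surjective f
  x_inj : Function.Injective x
  y_inj : Function.Injective y

variable {P C : Type} [Fintype P] [Fintype C]

/-- Left end `x_l(c)` of the span of color `c`. -/
noncomputable def xl (S : CPS P C) (c : C) : ℝ :=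
  sInf (S.x '' {p | S.f p = c})

/-- Right end `x_r(c)` of the span of color `c`. -/
noncomputable def xr (S : CPS P C) (c : C) : ℝ :=
  sSup (S.x '' {p | S.f p = c})

/-- The bus of color `c`: the horizontal segment at height `Y c` over the span of `c`. -/
def busSeg (S : CPS P C) (Y : C → ℝ) (c : C) : Set (ℝ × ℝ) :=
  {q | q.2 = Y c ∧ q.1 ∈ Icc (xl S c) (xr S c)}

/-- The connection segment of point `p`: the vertical segment from `p` to its bus. -/
def connSeg (S : CPS P C) (Y : C → ℝ) (p : P) : Set (ℝ × ℝ) :=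
  {q | q.1 = S.x p ∧ q.2 ∈ uIcc (S.y p) (Y (S.f p))}

/-- Planarity of a bus realization `Y`: no bus contains a point of a different
color, no bus intersects the connection segment of a point of a different color,
and no two connection segments of points of different colors intersect. -/
def PlanarBus (S : CPS P C) (Y : C → ℝ) : Prop :=
  (∀ (c : C) (p : P), S.f p ≠ c → (S.x p, S.y p) ∉ busSeg S Y c) ∧
  (∀ (c : C) (p : P), S.f p ≠ c → Disjoint (busSeg S Y c) (connSeg S Y p)) ∧
  (∀ p q : P, S.f p ≠ S.f q → Disjoint (connSeg S Y p) (connSeg S Y q))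

/-- A center-bus: the bus height is strictly between the minimum and maximum
y-coordinates of its points. -/
noncomputable def isCenterBus (S : CPS P C) (Y : C → ℝ) (c : C) : Prop :=
  sInf (S.y '' {p | S.f p = c}) < Y c ∧ Y c < sSup (S.y '' {p | S.f p = c})

/-!
The span of every color of a separable diagonal point set contains the middle of the diagonal,
and a realization is planar as soon as no bus meets the connection of a point of another color
under its span. Move each bus to its integer part clamped into its span, plus a fraction that
decreases with the left end of the span. This preserves the vertical order of any two buses and
the side of each bus on which every point under it lies, hence planarity, and it puts each bus
strictly between its two points.
-/

open Function

lemma notMem_uIcc_iff {α : Type*} [LinearOrder α] {a b c : α} :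
    c ∉ uIcc a b ↔ (c < a ∧ c < b) ∨ (a < c ∧ b < c) := by
  rw [mem_uIcc]
  grind

lemma notMem_uIcc_of_imp {α β : Type*} [LinearOrder α] [LinearOrder β] {a b c : α}
    {a' b' c' : β} (h : c ∉ uIcc a b) (ha : c < a → c' < a') (hb : c < b → c' < b')
    (ha' : a < c → a' < c') (hb' : b < c → b' < c') : c' ∉ uIcc a' b' := by
  rw [notMem_uIcc_iff] at h ⊢
  exact h.imp (And.imp ha hb) (And.imp ha' hb')

lemma lt_of_notMem_uIcc_of_lt {α : Type*} [LinearOrder α] {a b c : α} (h : c ∉ uIcc a b)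
    (hcb : c < b) : c < a :=
  lt_of_not_ge fun hac => h (Icc_subset_uIcc ⟨hac, hcb.le⟩)

lemma lt_of_notMem_uIcc_of_gt {α : Type*} [LinearOrder α] {a b c : α} (h : c ∉ uIcc a b)
    (hbc : b < c) : a < c :=
  lt_of_not_ge fun hca => h (Icc_subset_uIcc' ⟨hbc.le, hca⟩)

lemma planarBus_iff {P C : Type} [Fintype P] [Fintype C] (S : CPS P C) (Y : C → ℝ) :
    PlanarBus S Y ↔ ∀ c p, S.f p ≠ c → S.x p ∈ Icc (xl S c) (xr S c) →
      Y c ∉ uIcc (S.y p) (Y (S.f p)) := by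
  constructor
  · intro hP c p hp hx hY
    have hbus : (S.x p, Y c) ∈ busSeg S Y c := ⟨rfl, hx⟩
    exact disjoint_left.1 (hP.2.1 c p hp) hbus ⟨rfl, hY⟩
  · intro h
    refine ⟨fun c p hp hbus => h c p hp hbus.2 (hbus.1 ▸ left_mem_uIcc), fun c p hp => ?_,
      fun p q hpq => disjoint_left.2 fun z hp hq => hpq (congrArg S.f (S.x_inj ?_))⟩
    · exact disjoint_left.2 fun z hbus hconn => h c p hp (hconn.1 ▸ hbus.2) (hbus.1 ▸ hconn.2)
    · exact hp.1.symm.trans hq.1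

section Avoiding

variable {C : Type} {ℓ r : C → ℤ} {Y : C → ℝ} {c d : C} {e : ℤ}

/-- Planarity of buses at heights `Y` over a diagonal point set whose color `c` has its points
at `ℓ c` and `r c`: no bus meets the connection of a point of another color under its span. -/
def Avoiding (ℓ r : C → ℤ) (Y : C → ℝ) : Prop :=
  ∀ c d, c ≠ d → ∀ e ∈ ({ℓ d, r d} : Set ℤ), e ∈ Icc (ℓ c) (r c) →
    Y c ∉ uIcc (e : ℝ) (Y d)

lemma endpoint_mem_Ioo (hℓ : Injective ℓ) (hr : Injective r) (hℓr : ∀ c d, ℓ c < r d)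
    (hcd : c ≠ d) (he : e ∈ ({ℓ d, r d} : Set ℤ)) (hspan : e ∈ Icc (ℓ c) (r c)) :
    e ∈ Ioo (ℓ c) (r c) := by
  rcases he with rfl | rfl
  · exact ⟨lt_of_le_of_ne hspan.1 (hℓ.ne hcd), hℓr d c⟩
  · exact ⟨hℓr c d, lt_of_le_of_ne hspan.2 (hr.ne hcd.symm)⟩

lemma Avoiding.injective (hY : Avoiding ℓ r Y) (hℓ : Injective ℓ)
    (hℓr : ∀ c d, ℓ c < r d) : Injective Y := by
  intro c d hcd
  by_contra hne
  rcases lt_or_gt_of_ne (hℓ.ne hne) with h | h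
  · exact hY c d hne (ℓ d) (.inl rfl) ⟨h.le, (hℓr d c).le⟩
      (hcd ▸ right_mem_uIcc)
  · exact hY d c (Ne.symm hne) (ℓ c) (.inl rfl) ⟨h.le, (hℓr c d).le⟩
      (hcd ▸ right_mem_uIcc)

noncomputable def zone (ℓ r : C → ℤ) (Y : C → ℝ) (c : C) : ℤ :=
  max (ℓ c) (min ⌊Y c⌋ (r c - 1))

/-- Buses sharing a zone are stacked by decreasing left end: of two such buses, the one
starting further left passes over the other's left point, so it has to be the higher one. -/
noncomputable def recenter (ℓ r : C → ℤ) (Y : C → ℝ) (c : C) : ℝ :=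
  zone ℓ r Y c + Real.sigmoid (-ℓ c)

lemma left_lt_recenter : (ℓ c : ℝ) < recenter ℓ r Y c := by
  rw [recenter]
  have : (ℓ c : ℝ) ≤ zone ℓ r Y c := by exact_mod_cast le_max_left _ _
  linarith [Real.sigmoid_pos (-ℓ c : ℝ)]

lemma recenter_lt_right (h : ℓ c < r c) : recenter ℓ r Y c < r c := by
  rw [recenter]
  have : (zone ℓ r Y c : ℝ) + 1 ≤ r c := by
    have : zone ℓ r Y c + 1 ≤ r c := by unfold zone; omega
    exact_mod_cast this
  linarith [Real.sigmoid_lt_one (-ℓ c : ℝ)]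

lemma recenter_lt_of_lt (hℓe : ℓ c < e) (h : Y c < e) : recenter ℓ r Y c < e := by
  rw [recenter]
  have : (zone ℓ r Y c : ℝ) + 1 ≤ e := by
    have := Int.floor_lt.2 h
    have : zone ℓ r Y c + 1 ≤ e := by unfold zone; omega
    exact_mod_cast this
  linarith [Real.sigmoid_lt_one (-ℓ c : ℝ)]

lemma lt_recenter_of_lt (her : e < r c) (h : e < Y c) : (e : ℝ) < recenter ℓ r Y c := by
  rw [recenter]
  have : (e : ℝ) ≤ zone ℓ r Y c := by
    have := Int.le_floor.2 h.le
    have : e ≤ zone ℓ r Y c := by unfold zone; omega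
    exact_mod_cast this
  linarith [Real.sigmoid_pos (-ℓ c : ℝ)]

lemma recenter_lt_recenter_of_zone
    (h : zone ℓ r Y c < zone ℓ r Y d ∨ zone ℓ r Y c = zone ℓ r Y d ∧ ℓ d < ℓ c) :
    recenter ℓ r Y c < recenter ℓ r Y d := by
  unfold recenter
  rcases h with h | ⟨h, hℓ⟩
  · have : (zone ℓ r Y c : ℝ) + 1 ≤ zone ℓ r Y d := by exact_mod_cast h
    linarith [Real.sigmoid_lt_one (-ℓ c : ℝ), Real.sigmoid_pos (-ℓ d : ℝ)]
  · rw [h]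
    gcongr

lemma Avoiding.zone_lt_or_eq_and_left_lt (hY : Avoiding ℓ r Y) (hℓ : Injective ℓ)
    (hr : Injective r) (hℓr : ∀ c d, ℓ c < r d) (h : Y c < Y d) :
    zone ℓ r Y c < zone ℓ r Y d ∨ zone ℓ r Y c = zone ℓ r Y d ∧ ℓ d < ℓ c := by
  have hcd : c ≠ d := by rintro rfl; exact h.false
  have hfloor := Int.floor_le_floor h.le
  have := hℓr c c; have := hℓr d d; have := hℓr c d; have := hℓr d c
  unfold zone
  rcases lt_or_gt_of_ne (hℓ.ne hcd) with hℓcd | hℓdc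
  · have := lt_of_notMem_uIcc_of_lt
      (hY c d hcd (ℓ d) (.inl rfl) ⟨hℓcd.le, (hℓr d c).le⟩) h
    have := Int.floor_lt.2 this
    omega
  · have := lt_of_notMem_uIcc_of_gt
      (hY d c hcd.symm (ℓ c) (.inl rfl) ⟨hℓdc.le, (hℓr c d).le⟩) h
    have := Int.le_floor.2 this.le
    rcases lt_or_gt_of_ne (hr.ne hcd) with hrcd | hrdc
    · have := lt_of_notMem_uIcc_of_gt
        (hY d c hcd.symm (r c) (.inr rfl) ⟨(hℓr d c).le, hrcd.le⟩) h
      have := Int.le_floor.2 this.le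
      omega
    · have := lt_of_notMem_uIcc_of_lt
        (hY c d hcd (r d) (.inr rfl) ⟨(hℓr c d).le, hrdc.le⟩) h
      have := Int.floor_lt.2 this
      omega

lemma Avoiding.recenter_lt_recenter (hY : Avoiding ℓ r Y) (hℓ : Injective ℓ)
    (hr : Injective r) (hℓr : ∀ c d, ℓ c < r d) (h : Y c < Y d) :
    recenter ℓ r Y c < recenter ℓ r Y d :=
  recenter_lt_recenter_of_zone (hY.zone_lt_or_eq_and_left_lt hℓ hr hℓr h)

theorem Avoiding.recenter (hY : Avoiding ℓ r Y) (hℓ : Injective ℓ)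
    (hr : Injective r) (hℓr : ∀ c d, ℓ c < r d) : Avoiding ℓ r (recenter ℓ r Y) := by
  intro c d hcd e he hspan
  have he' := endpoint_mem_Ioo hℓ hr hℓr hcd he hspan
  exact notMem_uIcc_of_imp (hY c d hcd e he hspan) (recenter_lt_of_lt he'.1)
    (hY.recenter_lt_recenter hℓ hr hℓr) (lt_recenter_of_lt he'.2)
    (hY.recenter_lt_recenter hℓ hr hℓr)

end Avoiding

structure IsSeparableDiagonal {k : ℕ} {C : Type} [Fintype C] (S : CPS (Fin (2 * k)) C)
    (I J : C → Fin (2 * k)) : Prop where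
  x_eq : ∀ i : Fin (2 * k), S.x i = ((i : ℕ) : ℝ) + 1
  y_eq : ∀ i : Fin (2 * k), S.y i = ((i : ℕ) : ℝ) + 1
  left_lt : ∀ c, (I c : ℕ) < k
  le_right : ∀ c, k ≤ (J c : ℕ)
  f_left : ∀ c, S.f (I c) = c
  f_right : ∀ c, S.f (J c) = c
  eq_or_eq : ∀ c p, S.f p = c → p = I c ∨ p = J c

def diagCoord {n : ℕ} (i : Fin n) : ℤ := (i : ℕ) + 1

namespace IsSeparableDiagonal

variable {k : ℕ} {C : Type} [Fintype C] {S : CPS (Fin (2 * k)) C} {I J : C → Fin (2 * k)}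

lemma x_eq_diagCoord (h : IsSeparableDiagonal S I J) (i : Fin (2 * k)) :
    S.x i = diagCoord i := by
  rw [h.x_eq, diagCoord]
  push_cast
  rfl

lemma y_eq_diagCoord (h : IsSeparableDiagonal S I J) (i : Fin (2 * k)) :
    S.y i = diagCoord i := by
  rw [h.y_eq, diagCoord]
  push_cast
  rfl

lemma fiber_eq (h : IsSeparableDiagonal S I J) (c : C) : {p | S.f p = c} = {I c, J c} := by
  ext p
  refine ⟨h.eq_or_eq c p, ?_⟩
  rintro (rfl | rfl)
  exacts [h.f_left c, h.f_right c]

lemma left_lt_right (h : IsSeparableDiagonal S I J) (c d : C) :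
    diagCoord (I c) < diagCoord (J d) := by
  have := h.left_lt c
  have := h.le_right d
  unfold diagCoord
  omega

lemma left_injective (h : IsSeparableDiagonal S I J) : Injective (diagCoord ∘ I) :=
  fun c d hcd => by
    have : I c = I d := Fin.ext (by simpa [diagCoord] using hcd)
    rw [← h.f_left c, this, h.f_left d]

lemma right_injective (h : IsSeparableDiagonal S I J) : Injective (diagCoord ∘ J) :=
  fun c d hcd => by
    have : J c = J d := Fin.ext (by simpa [diagCoord] using hcd)
    rw [← h.f_right c, this, h.f_right d]

lemma sInf_image_fiber (h : IsSeparableDiagonal S I J) {g : Fin (2 * k) → ℝ}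
    (hg : ∀ i, g i = diagCoord i) (c : C) : sInf (g '' {p | S.f p = c}) = diagCoord (I c) := by
  rw [h.fiber_eq, image_pair, csInf_pair, hg, hg,
    min_eq_left (by exact_mod_cast (h.left_lt_right c c).le)]

lemma sSup_image_fiber (h : IsSeparableDiagonal S I J) {g : Fin (2 * k) → ℝ}
    (hg : ∀ i, g i = diagCoord i) (c : C) : sSup (g '' {p | S.f p = c}) = diagCoord (J c) := by
  rw [h.fiber_eq, image_pair, csSup_pair, hg, hg,
    max_eq_right (by exact_mod_cast (h.left_lt_right c c).le)]

lemma x_mem_span_iff (h : IsSeparableDiagonal S I J) (c : C) (p : Fin (2 * k)) :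
    S.x p ∈ Icc (xl S c) (xr S c) ↔
      diagCoord p ∈ Icc (diagCoord (I c)) (diagCoord (J c)) := by
  rw [xl, xr, h.sInf_image_fiber h.x_eq_diagCoord, h.sSup_image_fiber h.x_eq_diagCoord,
    h.x_eq_diagCoord]
  simp only [mem_Icc, Int.cast_le]

lemma planarBus_iff_avoiding (h : IsSeparableDiagonal S I J) (Y : C → ℝ) :
    PlanarBus S Y ↔ Avoiding (diagCoord ∘ I) (diagCoord ∘ J) Y := by
  rw [planarBus_iff]
  constructor
  · intro hP c d hcd e he hspan
    obtain ⟨p, hpd, rfl⟩ : ∃ p, S.f p = d ∧ e = diagCoord p := by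
      rcases he with rfl | rfl
      exacts [⟨I d, h.f_left d, rfl⟩, ⟨J d, h.f_right d, rfl⟩]
    have := hP c p (hpd ▸ hcd.symm) ((h.x_mem_span_iff c p).2 hspan)
    rwa [h.y_eq_diagCoord, hpd] at this
  · intro hA c p hp hspan
    rw [h.y_eq_diagCoord]
    refine hA c (S.f p) (Ne.symm hp) (diagCoord p) ?_ ((h.x_mem_span_iff c p).1 hspan)
    rcases h.eq_or_eq _ p rfl with hp | hp
    exacts [.inl (congrArg diagCoord hp), .inr (congrArg diagCoord hp)]

lemma isCenterBus_iff (h : IsSeparableDiagonal S I J) (Y : C → ℝ) (c : C) :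
    isCenterBus S Y c ↔ (diagCoord (I c) : ℝ) < Y c ∧ Y c < diagCoord (J c) := by
  rw [isCenterBus, h.sInf_image_fiber h.y_eq_diagCoord, h.sSup_image_fiber h.y_eq_diagCoord]

end IsSeparableDiagonal

/-- a separable diagonal point set admits a planar bus realization
iff it admits a planar bus realization in which every bus is a center-bus. -/
theorem stmt15 {k : ℕ} {C : Type} [Fintype C] (S : CPS (Fin (2 * k)) C)
    (hx : ∀ i : Fin (2 * k), S.x i = ((i : ℕ) : ℝ) + 1)
    (hy : ∀ i : Fin (2 * k), S.y i = ((i : ℕ) : ℝ) + 1)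
    (hsep : ∀ c : C, ∃ i j : Fin (2 * k), (i : ℕ) < k ∧ k ≤ (j : ℕ) ∧
      S.f i = c ∧ S.f j = c ∧ ∀ l : Fin (2 * k), S.f l = c → l = i ∨ l = j) :
    (∃ Y : C → ℝ, Function.Injective Y ∧ PlanarBus S Y) ↔
      (∃ Y : C → ℝ, Function.Injective Y ∧ PlanarBus S Y ∧
        ∀ c : C, isCenterBus S Y c) := by
  constructor
  · rintro ⟨Y, -, hY⟩
    choose I J hIk hkJ hfI hfJ huniq using hsep
    have h : IsSeparableDiagonal S I J := ⟨hx, hy, hIk, hkJ, hfI, hfJ, huniq⟩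
    have hℓr : ∀ c d, (diagCoord ∘ I) c < (diagCoord ∘ J) d := h.left_lt_right
    have hA := ((h.planarBus_iff_avoiding Y).1 hY).recenter h.left_injective h.right_injective hℓr
    refine ⟨_, hA.injective h.left_injective hℓr, (h.planarBus_iff_avoiding _).2 hA,
      fun c => (h.isCenterBus_iff _ c).2 ⟨left_lt_recenter (ℓ := diagCoord ∘ I),
        recenter_lt_right (hℓr c c)⟩⟩
  · rintro ⟨Y, hinj, hY, -⟩
    exact ⟨Y, hinj, hY⟩
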